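/- The Milnor number of the polynomial F(x,y) = x⁵ + y⁵ + x²y² equals 16, i.e. dim_C(C[x,y]/(∂F/∂x, ∂F/∂y)) = 16. -/

import Mathlib

/-!
Put `u = 5x/2` and `w = 5y/2`. The Jacobian ideal becomes `(u⁴ + uw², w⁴ + u²w)`, with a Gröbner
basis whose leading monomials are `u⁴, u²w, uw³, w¹¹`. The 16 standard monomials `1, w, …, w¹⁰,
u, uw, uw², u², u³` therefore span the quotient: multiplication by `u` and by `w` maps their span
into itself, acting by two integer matrices. These matrices commute and satisfy the two relations,
so they make `K¹⁶` a module over the quotient on which `e₀` is cyclic and the `k`-th standard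
monomial acts as `e₀ ↦ eₖ`; hence the monomials are also linearly independent.
-/

open MvPolynomial Matrix

theorem MvPolynomial.submodule_eq_top_of_one_mem_of_mul_X_mem {σ R A : Type*} [CommSemiring R]
    [CommSemiring A] [Algebra R A] {f : MvPolynomial σ R →ₐ[R] A} (hf : Function.Surjective f)
    {S : Submodule R A} (h1 : 1 ∈ S) (hX : ∀ i, ∀ z ∈ S, f (X i) * z ∈ S) : S = ⊤ := by
  have hmul : ∀ p, ∀ z ∈ S, f p * z ∈ S := by
    intro p
    induction p using MvPolynomial.induction_on with
    | C a => intro z hz; simpa [Algebra.smul_def] using S.smul_mem a hz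
    | add p q hp hq => intro z hz; rw [map_add, add_mul]; exact S.add_mem (hp z hz) (hq z hz)
    | mul_X p i hp => intro z hz; rw [map_mul, mul_assoc]; exact hp _ (hX i z hz)
  refine eq_top_iff.mpr fun a _ => ?_
  obtain ⟨p, rfl⟩ := hf a
  simpa using hmul p 1 h1

theorem Submodule.mul_mem_span_of_mul_eq_sum {R A ι : Type*} [CommRing R] [Ring A]
    [Algebra R A] [Fintype ι] {v : ι → A} {a : A} (M : Matrix ι ι ℤ)
    (h : ∀ k, a * v k = ∑ j, M j k • v j) {z : A} (hz : z ∈ span R (Set.range v)) :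
    a * z ∈ span R (Set.range v) := by
  refine (span_le (p := (span R (Set.range v)).comap (LinearMap.mulLeft R a))).mpr ?_ hz
  rintro _ ⟨k, rfl⟩
  rw [SetLike.mem_coe, mem_comap, LinearMap.mulLeft_apply, h k]
  exact sum_mem fun j _ => zsmul_mem (subset_span (Set.mem_range_self j)) (M j k)

theorem Matrix.pow_mulVec_eq_iterate {n R : Type*} [Fintype n] [DecidableEq n] [CommSemiring R]
    (M : Matrix n n R) (k : ℕ) (v : n → R) : M ^ k *ᵥ v = (M *ᵥ ·)^[k] v := by
  induction k with
  | zero => simp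
  | succ k ih => rw [pow_succ', ← mulVec_mulVec, ih, Function.iterate_succ_apply']

namespace MilnorExample

def basisExponent : Fin 16 → ℕ × ℕ :=
  ![(0, 0), (0, 1), (0, 2), (0, 3), (0, 4), (0, 5), (0, 6), (0, 7), (0, 8), (0, 9), (0, 10),
    (1, 0), (1, 1), (1, 2), (2, 0), (3, 0)]

section Monoid

variable {M : Type*} [Monoid M]

def basisMonomial (u w : M) (k : Fin 16) : M :=
  u ^ (basisExponent k).1 * w ^ (basisExponent k).2

theorem basisMonomial_zero (u w : M) : basisMonomial u w 0 = 1 := by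
  simp [basisMonomial, basisExponent]

theorem map_basisMonomial {N F : Type*} [Monoid N] [FunLike F M N] [MonoidHomClass F M N]
    (f : F) (u w : M) (k : Fin 16) : f (basisMonomial u w k) = basisMonomial (f u) (f w) k := by
  simp only [basisMonomial, map_mul, map_pow]

end Monoid

/- Column `k` of `mulMatrixU` (resp. `mulMatrixW`) lists the coordinates of `u * basisMonomial u w k`
(resp. `w * basisMonomial u w k`) in the family `basisMonomial u w`, when
`u⁴ + uw² = w⁴ + u²w = 0`. -/
def mulMatrixU : Matrix (Fin 16) (Fin 16) ℤ :=
  !![0,0,0,0,0,0,0,0,0,0,0,0,0,0,0,0;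
     0,0,0,0,0,0,0,0,0,0,0,0,0,0,0,0;
     0,0,0,0,0,0,0,0,0,0,0,0,0,0,0,0;
     0,0,0,0,0,0,0,0,0,0,0,0,0,0,0,0;
     0,0,0,0,0,0,0,0,0,0,0,0,-1,0,0,0;
     0,0,0,0,0,0,0,0,0,0,0,0,0,-1,0,0;
     0,0,0,0,0,0,0,1,0,0,0,0,0,0,0,0;
     0,0,0,-1,0,0,0,0,1,0,0,0,0,0,0,0;
     0,0,0,0,-1,0,0,0,0,1,0,0,0,0,0,0;
     0,0,0,0,0,-1,0,0,0,0,1,0,0,0,0,0;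
     0,0,0,0,0,0,-1,0,0,0,0,0,0,0,0,0;
     1,0,0,0,0,0,0,0,0,0,0,0,0,0,0,0;
     0,1,0,0,0,0,0,0,0,0,0,0,0,0,0,0;
     0,0,1,0,0,0,0,0,0,0,0,0,0,0,0,-1;
     0,0,0,0,0,0,0,0,0,0,0,1,0,0,0,0;
     0,0,0,0,0,0,0,0,0,0,0,0,0,0,1,0]

def mulMatrixW : Matrix (Fin 16) (Fin 16) ℤ :=
  !![0,0,0,0,0,0,0,0,0,0,0,0,0,0,0,0;
     1,0,0,0,0,0,0,0,0,0,0,0,0,0,0,0;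
     0,1,0,0,0,0,0,0,0,0,0,0,0,0,0,0;
     0,0,1,0,0,0,0,0,0,0,0,0,0,0,0,0;
     0,0,0,1,0,0,0,0,0,0,0,0,0,0,-1,0;
     0,0,0,0,1,0,0,0,0,0,0,0,0,0,0,0;
     0,0,0,0,0,1,0,0,0,0,-1,0,0,0,0,0;
     0,0,0,0,0,0,1,0,0,0,0,0,0,-1,0,0;
     0,0,0,0,0,0,0,1,0,0,0,0,0,0,0,1;
     0,0,0,0,0,0,0,0,1,0,0,0,0,0,0,0;
     0,0,0,0,0,0,0,0,0,1,0,0,0,0,0,0;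
     0,0,0,0,0,0,0,0,0,0,0,0,0,0,0,0;
     0,0,0,0,0,0,0,0,0,0,0,1,0,0,0,0;
     0,0,0,0,0,0,0,0,0,0,0,0,1,0,0,0;
     0,0,0,0,0,0,0,0,0,0,0,0,0,0,0,0;
     0,0,0,0,0,0,0,0,0,0,0,0,0,0,0,0]

section Relations

variable {A : Type*} [CommRing A] {u w : A}

theorem u_mul_basisMonomial (hu : u ^ 4 + u * w ^ 2 = 0) (hw : w ^ 4 + u ^ 2 * w = 0)
    (k : Fin 16) : u * basisMonomial u w k = ∑ j, mulMatrixU j k • basisMonomial u w j := by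
  fin_cases k <;>
    simp only [basisMonomial, basisExponent, mulMatrixU, Fin.sum_univ_succ, Fin.sum_univ_zero,
      Fin.reduceFinMk, of_apply, cons_val, cons_val_succ, cons_val_zero] <;>
    grind

theorem w_mul_basisMonomial (hu : u ^ 4 + u * w ^ 2 = 0) (hw : w ^ 4 + u ^ 2 * w = 0)
    (k : Fin 16) : w * basisMonomial u w k = ∑ j, mulMatrixW j k • basisMonomial u w j := by
  fin_cases k <;>
    simp only [basisMonomial, basisExponent, mulMatrixW, Fin.sum_univ_succ, Fin.sum_univ_zero,
      Fin.reduceFinMk, of_apply, cons_val, cons_val_succ, cons_val_zero] <;>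
    grind

end Relations

theorem mulMatrixU_mul_comm : mulMatrixU * mulMatrixW = mulMatrixW * mulMatrixU := by
  decide +kernel

theorem mulMatrixU_relation : mulMatrixU ^ 4 + mulMatrixU * mulMatrixW ^ 2 = 0 := by
  decide +kernel

theorem mulMatrixW_relation : mulMatrixW ^ 4 + mulMatrixU ^ 2 * mulMatrixW = 0 := by
  decide +kernel

theorem basisMonomial_mulMatrix_mulVec_single (k : Fin 16) :
    basisMonomial mulMatrixU mulMatrixW k *ᵥ Pi.single 0 1 = Pi.single k 1 := by
  -- iterating `mulVec` keeps the kernel computation small; matrix powers are far slower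
  rw [basisMonomial, ← mulVec_mulVec, pow_mulVec_eq_iterate, pow_mulVec_eq_iterate]
  revert k
  decide +kernel

section CastMatrix

variable (R : Type*) [CommRing R]

abbrev matU : Matrix (Fin 16) (Fin 16) R := (Int.castRingHom R).mapMatrix mulMatrixU

abbrev matW : Matrix (Fin 16) (Fin 16) R := (Int.castRingHom R).mapMatrix mulMatrixW

theorem matU_mul_comm : matU R * matW R = matW R * matU R := by
  rw [← map_mul, ← map_mul, mulMatrixU_mul_comm]

theorem matU_relation : matU R ^ 4 + matU R * matW R ^ 2 = 0 := by
  rw [← map_pow, ← map_pow, ← map_mul, ← map_add, mulMatrixU_relation, map_zero]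

theorem matW_relation : matW R ^ 4 + matU R ^ 2 * matW R = 0 := by
  rw [← map_pow, ← map_pow, ← map_mul, ← map_add, mulMatrixW_relation, map_zero]

theorem basisMonomial_mat_mulVec_single (k : Fin 16) :
    basisMonomial (matU R) (matW R) k *ᵥ Pi.single 0 1 = Pi.single k 1 := by
  ext i
  have h := congrFun (basisMonomial_mulMatrix_mulVec_single k) i
  rw [mulVec_single_one] at h ⊢
  rw [← map_basisMonomial ((Int.castRingHom R).mapMatrix)]
  simp only [col_apply, RingHom.mapMatrix_apply, map_apply] at h ⊢
  rw [h]
  rcases eq_or_ne i k with rfl | hik <;> simp [*]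

end CastMatrix

noncomputable section JacobianAlgebra

open scoped IsMulCommutative

variable (K : Type*) [Field K]

abbrev jacobianIdeal : Ideal (MvPolynomial (Fin 2) K) :=
  Ideal.span {5 * X 0 ^ 4 + 2 * X 0 * X 1 ^ 2, 5 * X 1 ^ 4 + 2 * X 0 ^ 2 * X 1}

abbrev JacobianAlgebra := MvPolynomial (Fin 2) K ⧸ jacobianIdeal K

def genU : JacobianAlgebra K := (5 / 2 : K) • Ideal.Quotient.mk _ (X 0)

def genW : JacobianAlgebra K := (5 / 2 : K) • Ideal.Quotient.mk _ (X 1)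

abbrev RepAlgebra := Algebra.adjoin K {matU K, matW K}

instance : IsMulCommutative (RepAlgebra K) :=
  Algebra.isMulCommutative_adjoin K <| by
    rintro a (rfl | rfl) b (rfl | rfl)
    exacts [rfl, matU_mul_comm K, (matU_mul_comm K).symm, rfl]

def repU : RepAlgebra K := ⟨matU K, Algebra.subset_adjoin (by simp)⟩

def repW : RepAlgebra K := ⟨matW K, Algebra.subset_adjoin (by simp)⟩

theorem repU_relation : repU K ^ 4 + repU K * repW K ^ 2 = 0 :=
  Subtype.ext (matU_relation K)

theorem repW_relation : repW K ^ 4 + repU K ^ 2 * repW K = 0 :=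
  Subtype.ext (matW_relation K)

def repHom : MvPolynomial (Fin 2) K →ₐ[K] RepAlgebra K :=
  aeval ![(2 / 5 : K) • repU K, (2 / 5 : K) • repW K]

variable [CharZero K]

theorem genU_relation : genU K ^ 4 + genU K * genW K ^ 2 = 0 := by
  have h : Ideal.Quotient.mk (jacobianIdeal K) (5 * X 0 ^ 4 + 2 * X 0 * X 1 ^ 2) = 0 :=
    Ideal.Quotient.eq_zero_iff_mem.mpr (Ideal.subset_span (by simp))
  simp only [map_add, map_mul, map_pow, map_ofNat] at h
  unfold genU genW
  linear_combination (norm := algebra) (125 / 16 : K) • h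

theorem genW_relation : genW K ^ 4 + genU K ^ 2 * genW K = 0 := by
  have h : Ideal.Quotient.mk (jacobianIdeal K) (5 * X 1 ^ 4 + 2 * X 0 ^ 2 * X 1) = 0 :=
    Ideal.Quotient.eq_zero_iff_mem.mpr (Ideal.subset_span (by simp))
  simp only [map_add, map_mul, map_pow, map_ofNat] at h
  unfold genU genW
  linear_combination (norm := algebra) (125 / 16 : K) • h

theorem mk_X_zero : Ideal.Quotient.mk (jacobianIdeal K) (X 0) = (2 / 5 : K) • genU K := by
  simp [genU, smul_smul]

theorem mk_X_one : Ideal.Quotient.mk (jacobianIdeal K) (X 1) = (2 / 5 : K) • genW K := by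
  simp [genW, smul_smul]

theorem span_basisMonomial_eq_top :
    Submodule.span K (Set.range (basisMonomial (genU K) (genW K))) = ⊤ := by
  refine MvPolynomial.submodule_eq_top_of_one_mem_of_mul_X_mem
    (Ideal.Quotient.mkₐ_surjective K (jacobianIdeal K)) ?_ fun i z hz => ?_
  · exact basisMonomial_zero (genU K) (genW K) ▸ Submodule.subset_span (Set.mem_range_self 0)
  rw [Ideal.Quotient.mkₐ_eq_mk]
  match i with
  | 0 =>
    rw [mk_X_zero, smul_mul_assoc]
    exact Submodule.smul_mem _ _ <| Submodule.mul_mem_span_of_mul_eq_sum mulMatrixU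
      (u_mul_basisMonomial (genU_relation K) (genW_relation K)) hz
  | 1 =>
    rw [mk_X_one, smul_mul_assoc]
    exact Submodule.smul_mem _ _ <| Submodule.mul_mem_span_of_mul_eq_sum mulMatrixW
      (w_mul_basisMonomial (genU_relation K) (genW_relation K)) hz

theorem jacobianIdeal_le_ker_repHom : jacobianIdeal K ≤ RingHom.ker (repHom K) := by
  refine Ideal.span_le.mpr ?_
  rintro _ (rfl | rfl) <;>
    simp only [SetLike.mem_coe, RingHom.mem_ker, repHom, map_add, map_mul, map_pow, map_ofNat,
      aeval_X, cons_val_zero, cons_val_one]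
  · linear_combination (norm := algebra) (16 / 125 : K) • repU_relation K
  · linear_combination (norm := algebra) (16 / 125 : K) • repW_relation K

def jacobianRep : JacobianAlgebra K →ₐ[K] RepAlgebra K :=
  Ideal.Quotient.liftₐ _ (repHom K) fun _ ha => jacobianIdeal_le_ker_repHom K ha

theorem jacobianRep_mk (p : MvPolynomial (Fin 2) K) :
    jacobianRep K (Ideal.Quotient.mk _ p) = repHom K p :=
  Ideal.Quotient.lift_mk _ _ _

theorem jacobianRep_genU : jacobianRep K (genU K) = repU K := by
  simp [genU, jacobianRep_mk, repHom, smul_smul]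

theorem jacobianRep_genW : jacobianRep K (genW K) = repW K := by
  simp [genW, jacobianRep_mk, repHom, smul_smul]

def cyclicEval : JacobianAlgebra K →ₗ[K] Fin 16 → K :=
  LinearMap.applyₗ (Pi.single 0 1) ∘ₗ Matrix.toLin'.toLinearMap ∘ₗ
    (RepAlgebra K).val.toLinearMap ∘ₗ (jacobianRep K).toLinearMap

theorem cyclicEval_basisMonomial (k : Fin 16) :
    cyclicEval K (basisMonomial (genU K) (genW K) k) = Pi.single k 1 := by
  simp only [cyclicEval, LinearMap.comp_apply, AlgHom.toLinearMap_apply, map_basisMonomial,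
    jacobianRep_genU, jacobianRep_genW]
  rw [LinearMap.applyₗ_apply_apply, LinearEquiv.coe_coe, toLin'_apply]
  exact basisMonomial_mat_mulVec_single K k

theorem linearIndependent_basisMonomial :
    LinearIndependent K (basisMonomial (genU K) (genW K)) := by
  refine LinearIndependent.of_comp (cyclicEval K) ?_
  convert (Pi.basisFun K (Fin 16)).linearIndependent
  ext1 k
  rw [Function.comp_apply, cyclicEval_basisMonomial, Pi.basisFun_apply]

theorem finrank_jacobianAlgebra : Module.finrank K (JacobianAlgebra K) = 16 := by
  rw [Module.finrank_eq_card_basis (Module.Basis.mk (linearIndependent_basisMonomial K)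
    (span_basisMonomial_eq_top K).ge), Fintype.card_fin]

end JacobianAlgebra

theorem pderiv_zero_eq (R : Type*) [CommSemiring R] :
    pderiv 0 ((X 0 : MvPolynomial (Fin 2) R) ^ 5 + X 1 ^ 5 + X 0 ^ 2 * X 1 ^ 2) =
      5 * X 0 ^ 4 + 2 * X 0 * X 1 ^ 2 := by
  simp only [map_add, Derivation.leibniz_pow, Derivation.leibniz, pderiv_X_self,
    pderiv_X_of_ne (by decide : (1 : Fin 2) ≠ 0), smul_eq_mul, nsmul_eq_mul]
  ring

theorem pderiv_one_eq (R : Type*) [CommSemiring R] :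
    pderiv 1 ((X 0 : MvPolynomial (Fin 2) R) ^ 5 + X 1 ^ 5 + X 0 ^ 2 * X 1 ^ 2) =
      5 * X 1 ^ 4 + 2 * X 0 ^ 2 * X 1 := by
  simp only [map_add, Derivation.leibniz_pow, Derivation.leibniz, pderiv_X_self,
    pderiv_X_of_ne (by decide : (0 : Fin 2) ≠ 1), smul_eq_mul, nsmul_eq_mul]
  ring

end MilnorExample

/-- The Milnor number of F(x,y) = x⁵ + y⁵ + x²y² equals 16. -/
theorem milnor_number_example :
    Module.finrank ℂ (MvPolynomial (Fin 2) ℂ ⧸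
      (Ideal.span {pderiv 0 ((X 0 : MvPolynomial (Fin 2) ℂ) ^ 5 + X 1 ^ 5 + X 0 ^ 2 * X 1 ^ 2),
        pderiv 1 ((X 0 : MvPolynomial (Fin 2) ℂ) ^ 5 + X 1 ^ 5 + X 0 ^ 2 * X 1 ^ 2)} : Ideal (MvPolynomial (Fin 2) ℂ))) = 16 := by
  rw [MilnorExample.pderiv_zero_eq, MilnorExample.pderiv_one_eq]
  exact MilnorExample.finrank_jacobianAlgebra ℂ
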